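/- Let α < 0, let β, γ ∈ ℝ, and let M > 0. Then the Schrödinger energy E is unbounded from below on H_M: for every C ∈ ℝ there exists an admissible u ∈ H¹(ℝ²) with ∫_{ℝ²}|u|² dx = M and E[u] < C. -/

import Mathlib

open MeasureTheory Real

noncomputable section

abbrev R2 : Type := EuclideanSpace ℝ (Fin 2)

/-- Admissibility of `u ∈ H¹(ℝ²)` for the Schrödinger energy: all four terms
of the energy are absolutely convergent. -/
def SchAdmissible (u : R2 → ℝ) : Prop :=
  Differentiable ℝ u ∧
  Integrable (fun x : R2 => u x ^ 2) ∧
  Integrable (fun x : R2 => ‖fderiv ℝ u x‖ ^ 2) ∧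
  Integrable (fun x : R2 => Real.log (1 + ‖x‖ ^ 2) * u x ^ 2) ∧
  Integrable (fun p : R2 × R2 => u p.1 ^ 2 * u p.2 ^ 2 * Real.log ‖p.1 - p.2‖) ∧
  Integrable (fun x : R2 => u x ^ 2 * Real.log (u x ^ 2))

/-- The Schrödinger energy `E[u]` with external potential `V(x) = 2 log(1+|x|²)`,
Poisson interaction with coupling `β` and logarithmic nonlinearity `γ`. -/
def SchEnergy (α β γ : ℝ) (u : R2 → ℝ) : ℝ :=
  (∫ x : R2, ‖fderiv ℝ u x‖ ^ 2) +
    α * (∫ x : R2, 2 * Real.log (1 + ‖x‖ ^ 2) * u x ^ 2) -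
    β * (∫ p : R2 × R2, u p.1 ^ 2 * u p.2 ^ 2 * Real.log ‖p.1 - p.2‖) +
    γ * ∫ x : R2, u x ^ 2 * Real.log (u x ^ 2)

/-! A fixed bump `u` of mass `M`, translated by `v`, keeps its mass and its kinetic, interaction
and entropy terms, while the potential term of the translate is at least
`2 log (1 + (‖v‖ - 1)²) M`. As `α < 0`, the energy of the translates tends to `-∞` as `‖v‖ → ∞`.
The only delicate admissibility condition is the interaction term, which is dominated by a
convolution because `log ‖·‖` is locally integrable in the plane. -/

open Metric Set Function Filter

theorem integrableOn_log_norm_ball {E : Type*} [NormedAddCommGroup E] [NormedSpace ℝ E]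
    [MeasurableSpace E] [BorelSpace E] [FiniteDimensional ℝ E] [Nontrivial E]
    (μ : Measure E) [μ.IsAddHaarMeasure] (r : ℝ) :
    IntegrableOn (fun z : E => log ‖z‖) (ball 0 r) μ := by
  rw [integrableOn_fun_norm_addHaar]
  have hlog : IntegrableOn log (Ioc 0 r) := intervalIntegral.intervalIntegrable_log'.1
  exact (hlog.continuousOn_mul_of_subset (continuousOn_id.pow (Module.finrank ℝ E - 1))
    isCompact_Icc measurableSet_Ioc Ioc_subset_Icc_self).mono_set Ioo_subset_Ioc_self

theorem integrable_sq_mul_sq_mul_log_norm_sub {E : Type*} [NormedAddCommGroup E]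
    [NormedSpace ℝ E] [MeasurableSpace E] [BorelSpace E] [FiniteDimensional ℝ E] [Nontrivial E]
    (μ : Measure E) [μ.IsAddHaarMeasure] {u : E → ℝ} (hu : Continuous u)
    (hsupp : HasCompactSupport u) :
    Integrable (fun p : E × E => u p.1 ^ 2 * u p.2 ^ 2 * log ‖p.1 - p.2‖) (μ.prod μ) := by
  obtain ⟨r, hr⟩ := hsupp.isCompact.isBounded.subset_ball 0
  obtain ⟨B, hB⟩ := hu.bounded_above_of_compact_support hsupp
  set g : E → ℝ := (ball 0 (2 * r)).indicator fun z => ‖log ‖z‖‖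
  have hg : Integrable g μ :=
    IntegrableOn.integrable_indicator (integrableOn_log_norm_ball μ _).norm measurableSet_ball
  have hg0 (z : E) : 0 ≤ g z := indicator_nonneg (fun _ _ => norm_nonneg _) z
  have hsq : Integrable (fun x => u x ^ 2) μ :=
    (hu.pow 2).integrable_of_hasCompactSupport (hsupp.comp_left (zero_pow two_ne_zero))
  -- the integrand of the convolution `u² ⋆ g` of two integrable functions
  have hconv : Integrable (fun p : E × E => u p.2 ^ 2 * g (p.1 - p.2)) (μ.prod μ) := by
    simpa using hsq.convolution_integrand (ContinuousLinearMap.mul ℝ ℝ) hg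
  refine (hconv.const_mul (B ^ 2)).mono' (Measurable.aestronglyMeasurable (by fun_prop))
    (.of_forall fun p => ?_)
  by_cases h0 : u p.1 = 0 ∨ u p.2 = 0
  · have : u p.1 ^ 2 * u p.2 ^ 2 = 0 := by rcases h0 with h0 | h0 <;> simp [h0]
    have := hg0 (p.1 - p.2)
    simp only [*, zero_mul, norm_zero]
    positivity
  push Not at h0
  have h1 : p.1 ∈ ball (0 : E) r := hr (subset_tsupport u h0.1)
  have h2 : p.2 ∈ ball (0 : E) r := hr (subset_tsupport u h0.2)
  have hdist : p.1 - p.2 ∈ ball (0 : E) (2 * r) := by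
    rw [mem_ball_zero_iff] at *
    calc ‖p.1 - p.2‖ ≤ ‖p.1‖ + ‖p.2‖ := norm_sub_le _ _
      _ < 2 * r := by linarith
  rw [show g (p.1 - p.2) = _ from indicator_of_mem hdist _, norm_mul, norm_mul, ← mul_assoc]
  gcongr
  · rw [norm_pow]
    exact pow_le_pow_left₀ (norm_nonneg _) (hB _) 2
  · exact (norm_of_nonneg (sq_nonneg _)).le

theorem schAdmissible_of_contDiff {u : R2 → ℝ} (hu : ContDiff ℝ 1 u)
    (hsupp : HasCompactSupport u) : SchAdmissible u := by
  have hsq : HasCompactSupport fun x => u x ^ 2 := hsupp.comp_left (zero_pow two_ne_zero)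
  refine ⟨hu.differentiable one_ne_zero, ?_, ?_, ?_,
    by simpa [Measure.volume_eq_prod] using
      integrable_sq_mul_sq_mul_log_norm_sub volume hu.continuous hsupp, ?_⟩
  · exact (hu.continuous.pow 2).integrable_of_hasCompactSupport hsq
  · have h1 : HasCompactSupport (fderiv ℝ u) := hsupp.fderiv (𝕜 := ℝ)
    have h2 : HasCompactSupport fun x => ‖fderiv ℝ u x‖ ^ 2 :=
      h1.comp_left (g := fun L : R2 →L[ℝ] ℝ => ‖L‖ ^ 2) (by simp)
    have h3 : Continuous fun x => ‖fderiv ℝ u x‖ ^ 2 :=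
      (hu.continuous_fderiv one_ne_zero).norm.pow 2
    exact h3.integrable_of_hasCompactSupport h2
  · refine Continuous.integrable_of_hasCompactSupport ?_ hsq.mul_left
    exact ((continuous_const.add (continuous_norm.pow 2)).log
      fun x => (by positivity : (0 : ℝ) < 1 + ‖x‖ ^ 2).ne').mul (hu.continuous.pow 2)
  · exact (continuous_mul_log.comp (hu.continuous.pow 2)).integrable_of_hasCompactSupport
      (hsq.comp_left (by simp))

theorem schEnergy_comp_sub (α β γ : ℝ) (u : R2 → ℝ) (v : R2) :
    SchEnergy α β γ (fun x => u (x - v)) =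
      SchEnergy 0 β γ u + α * ∫ x, 2 * log (1 + ‖x‖ ^ 2) * u (x - v) ^ 2 := by
  have hinteraction :
      ∫ p : R2 × R2, u (p.1 - v) ^ 2 * u (p.2 - v) ^ 2 * log ‖p.1 - p.2‖ =
        ∫ p : R2 × R2, u p.1 ^ 2 * u p.2 ^ 2 * log ‖p.1 - p.2‖ := by
    rw [Measure.volume_eq_prod]
    simpa using integral_sub_right_eq_self
      (fun p : R2 × R2 => u p.1 ^ 2 * u p.2 ^ 2 * log ‖p.1 - p.2‖) (v, v)
  simp only [SchEnergy, fderiv_comp_sub, hinteraction,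
    integral_sub_right_eq_self (fun x => ‖fderiv ℝ u x‖ ^ 2),
    integral_sub_right_eq_self (fun x => u x ^ 2 * log (u x ^ 2))]
  ring

theorem two_mul_log_one_add_sq_mul_integral_le {w : R2 → ℝ} (hw : SchAdmissible w) {R : ℝ}
    (hR : 0 ≤ R) (hsupp : support w ⊆ {x | R ≤ ‖x‖}) :
    2 * log (1 + R ^ 2) * ∫ x, w x ^ 2 ≤ ∫ x, 2 * log (1 + ‖x‖ ^ 2) * w x ^ 2 := by
  obtain ⟨-, hmass, -, hpot, -⟩ := hw
  rw [← integral_const_mul]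
  refine integral_mono (hmass.const_mul _) (by simpa [mul_assoc] using hpot.const_mul 2)
    fun x => ?_
  by_cases hx : w x = 0
  · simp [hx]
  have hRx : R ≤ ‖x‖ := hsupp hx
  have : log (1 + R ^ 2) ≤ log (1 + ‖x‖ ^ 2) := by gcongr
  gcongr

theorem schEnergy_comp_sub_le {α : ℝ} (hα : α ≤ 0) (β γ : ℝ) {u : R2 → ℝ} {v : R2}
    (hw : SchAdmissible fun x => u (x - v)) {r : ℝ} (hball : support u ⊆ ball 0 r)
    (hv : r ≤ ‖v‖) :
    SchEnergy α β γ (fun x => u (x - v)) ≤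
      SchEnergy 0 β γ u + 2 * α * log (1 + (‖v‖ - r) ^ 2) * ∫ x, u x ^ 2 := by
  have hfar : support (fun x => u (x - v)) ⊆ {x | ‖v‖ - r ≤ ‖x‖} := fun x hx => by
    have hxv : ‖x - v‖ < r := mem_ball_zero_iff.1 (hball hx)
    show ‖v‖ - r ≤ ‖x‖
    linarith [norm_sub_norm_le v x, norm_sub_rev v x]
  have hpot := two_mul_log_one_add_sq_mul_integral_le hw (sub_nonneg.2 hv) hfar
  rw [integral_sub_right_eq_self (fun x => u x ^ 2)] at hpot
  rw [schEnergy_comp_sub]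
  nlinarith

theorem exists_contDiff_support_subset_ball_integral_sq_eq {M : ℝ} (hM : 0 ≤ M) :
    ∃ u : R2 → ℝ, ContDiff ℝ 1 u ∧ HasCompactSupport u ∧ support u ⊆ ball 0 1 ∧
      ∫ x, u x ^ 2 = M := by
  let φ : ContDiffBump (0 : R2) := ⟨1 / 2, 1, by norm_num, by norm_num⟩
  have hφ : 0 < ∫ x, φ x ^ 2 :=
    (φ.continuous.pow 2).integral_pos_of_hasCompactSupport_nonneg_nonzero
      (φ.hasCompactSupport.comp_left (zero_pow two_ne_zero)) (fun x => sq_nonneg _)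
      (x := 0) (by simp [φ.one_of_mem_closedBall (mem_closedBall_self φ.rIn_pos.le)])
  refine ⟨fun x => √(M / ∫ x, φ x ^ 2) * φ x, contDiff_const.mul φ.contDiff,
    φ.hasCompactSupport.mul_left, (support_mul_subset_right _ _).trans φ.support_eq.subset, ?_⟩
  simp_rw [mul_pow, integral_const_mul, sq_sqrt (div_nonneg hM hφ.le)]
  field_simp

theorem stmt_15 (α β γ M : ℝ) (hα : α < 0) (hM : 0 < M) :
    ∀ C : ℝ, ∃ u : R2 → ℝ, SchAdmissible u ∧ (∫ x : R2, u x ^ 2) = M ∧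
      SchEnergy α β γ u < C := by
  intro C
  obtain ⟨u, hu, hsupp, hball, hmass⟩ := exists_contDiff_support_subset_ball_integral_sq_eq hM.le
  have hlim : Tendsto (fun R : ℝ => SchEnergy 0 β γ u + 2 * α * log (1 + R ^ 2) * M)
      atTop atBot := by
    refine tendsto_atBot_add_const_left _ _ ?_
    simp_rw [mul_right_comm _ _ M]
    refine Tendsto.const_mul_atTop_of_neg (by nlinarith) ?_
    exact tendsto_log_atTop.comp
      (tendsto_atTop_add_const_left _ _ (tendsto_pow_atTop two_ne_zero))
  obtain ⟨R, hRC, hR⟩ := ((hlim.eventually (eventually_lt_atBot C)).and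
    (eventually_ge_atTop 0)).exists
  obtain ⟨v, hv⟩ := exists_norm_eq R2 (by linarith : 0 ≤ R + 1)
  have hw : SchAdmissible fun x => u (x - v) :=
    schAdmissible_of_contDiff (hu.comp (contDiff_id.sub contDiff_const))
      (hsupp.comp_isClosedEmbedding (Homeomorph.subRight v).isClosedEmbedding)
  refine ⟨_, hw, by rwa [integral_sub_right_eq_self (fun x => u x ^ 2)], ?_⟩
  have := schEnergy_comp_sub_le hα.le β γ hw hball (by linarith : 1 ≤ ‖v‖)
  rw [hv, add_sub_cancel_right, hmass] at this
  exact this.trans_lt hRC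

end
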